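/- (Identity (F16) in the proof of Theorem 2) The vector x satisfies the quartic eigen-equation λ⁴x = λ³Bx − λ²(ΔB₂)x + λ(D_Δ − I)x + (B − ΔB₁)x. -/
import Mathlib


open Matrix ENNReal

namespace PercNB

variable {V : Type*} [Fintype V] [DecidableEq V]

/-- `p : Fin (g+1) → V` is a length-`g` directed path in the simple graph `G`:
`g+1` pairwise distinct vertices with consecutive vertices adjacent. -/
def IsDiPath (G : SimpleGraph V) (g : ℕ) (p : Fin (g+1) → V) : Prop :=
  Function.Injective p ∧ ∀ k : Fin g, G.Adj (p k.castSucc) (p k.succ)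

instance (G : SimpleGraph V) [DecidableRel G.Adj] (g : ℕ) :
    DecidablePred (IsDiPath G g) := fun p =>
  inferInstanceAs (Decidable (Function.Injective p ∧ ∀ k : Fin g, G.Adj (p k.castSucc) (p k.succ)))

/-- The type of length-`g` directed paths of `G`. -/
abbrev DiPath (G : SimpleGraph V) (g : ℕ) := {p : Fin (g+1) → V // IsDiPath G g p}

/-- The `g`-th-order non-backtracking matrix `B^(g)` of `G`, indexed by the length-`g`
directed paths of `G`: the `(p, q)` entry is `1` if `q k = p (k+1)` for `1 ≤ k ≤ g` and
`(p 1, …, p (g+1), q (g+1))` is a length-`(g+1)` directed path, and `0` otherwise. -/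
def NBM (G : SimpleGraph V) [DecidableRel G.Adj] (g : ℕ) :
    Matrix (DiPath G g) (DiPath G g) ℂ := fun p q =>
  if (∀ k : Fin g, q.1 k.castSucc = p.1 k.succ) ∧
      IsDiPath G (g+1) (Fin.snoc p.1 (q.1 (Fin.last g))) then 1 else 0

/-- The spectral radius of a finite square complex matrix:
the maximum modulus of its eigenvalues (`0` if the index type is empty). -/
noncomputable def specRad {n : Type*} [Fintype n] [DecidableEq n] (X : Matrix n n ℂ) : ℝ≥0∞ :=
  spectralRadius ℂ X

/-- `c : Fin k → V` is a simple cycle of length `k ≥ 3` in `G`: pairwise distinct vertices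
with `c t` adjacent to `c (t+1)` for `1 ≤ t ≤ k-1` and `c k` adjacent to `c 1`. -/
def IsSimpleCycle (G : SimpleGraph V) (k : ℕ) (c : Fin k → V) : Prop :=
  3 ≤ k ∧ Function.Injective c ∧
    ∀ t : Fin k, G.Adj (c t) (c ⟨(t.val + 1) % k, Nat.mod_lt _ t.pos⟩)

/-- The arc relation of the digraph `G^(g)` on the length-`g` directed paths of `G`:
`p → q` exactly when `B^(g)_{p,q} = 1`. -/
def NBArc (G : SimpleGraph V) (g : ℕ) (p q : DiPath G g) : Prop :=
  (∀ k : Fin g, q.1 k.castSucc = p.1 k.succ) ∧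
    IsDiPath G (g+1) (Fin.snoc p.1 (q.1 (Fin.last g)))

/-- The arc relation of the line digraph `L(G^(g-1))` (for `g ≥ 1`), under the identification
of its vertices — the arcs `(i₁,…,i_g) → (i₂,…,i_{g+1})` of `G^(g-1)` — with the length-`g`
directed paths `(i₁,…,i_{g+1})` of `G`: there is an arc `p → q` exactly when the arc
corresponding to `p` ends at the tail of the arc corresponding to `q`, i.e. when
`q k = p (k+1)` for `1 ≤ k ≤ g`. -/
def LineArc (G : SimpleGraph V) (g : ℕ) (p q : DiPath G g) : Prop :=
  ∀ k : Fin g, q.1 k.castSucc = p.1 k.succ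

/-- `c : Fin k → α` is a directed cycle of length `k` with respect to the arc relation `r`:
`k` pairwise distinct vertices with an arc from each to the cyclically next one. -/
def IsDiCycle {α : Type*} (r : α → α → Prop) (k : ℕ) (c : Fin k → α) : Prop :=
  Function.Injective c ∧ ∀ t : Fin k, r (c t) (c ⟨(t.val + 1) % k, Nat.mod_lt _ t.pos⟩)

/-- The type of directed edges of `G`: ordered pairs of adjacent vertices. -/
abbrev DiEdge (G : SimpleGraph V) := {e : V × V // G.Adj e.1 e.2}

/-- The standard non-backtracking matrix `B = B^(1)`, indexed by directed edges:
`B_{(i,j),(k,l)} = 1` iff `j = k`, `l ≠ i` and `j` is adjacent to `l`. -/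
def Bmat (G : SimpleGraph V) [DecidableRel G.Adj] : Matrix (DiEdge G) (DiEdge G) ℂ :=
  fun e f => if e.1.2 = f.1.1 ∧ f.1.2 ≠ e.1.1 ∧ G.Adj e.1.2 f.1.2 then 1 else 0

/-- `(ΔB₁)_{(i,j),(k,l)} = 1` iff `B_{(i,j),(k,l)} = 1` and `i` is adjacent to `l`. -/
def dB1 (G : SimpleGraph V) [DecidableRel G.Adj] : Matrix (DiEdge G) (DiEdge G) ℂ :=
  fun e f => if (e.1.2 = f.1.1 ∧ f.1.2 ≠ e.1.1 ∧ G.Adj e.1.2 f.1.2) ∧ G.Adj e.1.1 f.1.2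
    then 1 else 0

/-- `(ΔB₂)_{(i,j),(k,l)} = 1` iff `l = i` and `j` is adjacent to `k`. -/
def dB2 (G : SimpleGraph V) [DecidableRel G.Adj] : Matrix (DiEdge G) (DiEdge G) ℂ :=
  fun e f => if f.1.2 = e.1.1 ∧ G.Adj e.1.2 f.1.1 then 1 else 0

/-- The diagonal matrix `D_Δ` whose `((i,j),(i,j))` entry is the number of common
neighbours of `i` and `j`. -/
noncomputable def Ddel (G : SimpleGraph V) [DecidableRel G.Adj] :
    Matrix (DiEdge G) (DiEdge G) ℂ :=
  Matrix.diagonal fun e =>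
    ((Finset.univ.filter fun v => G.Adj e.1.1 v ∧ G.Adj e.1.2 v).card : ℂ)

/-- The `8E × 8E` block matrix
`M = [[B, −ΔB₂, D_Δ − I, B − ΔB₁], [I, 0, 0, 0], [0, I, 0, 0], [0, 0, I, 0]]`. -/
noncomputable def Mmat (G : SimpleGraph V) [DecidableRel G.Adj] :
    Matrix ((DiEdge G ⊕ DiEdge G) ⊕ (DiEdge G ⊕ DiEdge G))
      ((DiEdge G ⊕ DiEdge G) ⊕ (DiEdge G ⊕ DiEdge G)) ℂ :=
  Matrix.fromBlocks
    (Matrix.fromBlocks (Bmat G) (-(dB2 G)) 1 0)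
    (Matrix.fromBlocks (Ddel G - 1) (Bmat G - dB1 G) 0 0)
    (Matrix.fromBlocks 0 1 0 0)
    (Matrix.fromBlocks 0 0 1 0)

/-- `x_{(i,j)} = Σ_k ψ_{(i,j,k)}`, the sum over all vertices `k` adjacent to `j` with
`k ≠ i`; equivalently, the sum of `ψ` over all length-2 directed paths starting `(i,j,·)`. -/
noncomputable def xvec (G : SimpleGraph V) [DecidableRel G.Adj] (ψ : DiPath G 2 → ℂ) :
    DiEdge G → ℂ := fun e =>
  ∑ p ∈ Finset.univ.filter (fun p : DiPath G 2 => p.1 0 = e.1.1 ∧ p.1 1 = e.1.2), ψ p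

/-- `y_{(i,j)} = Σ_k ψ_{(i,j,k)}`, the sum over all vertices `k` adjacent to both `i`
and `j`. -/
noncomputable def yvec (G : SimpleGraph V) [DecidableRel G.Adj] (ψ : DiPath G 2 → ℂ) :
    DiEdge G → ℂ := fun e =>
  ∑ p ∈ Finset.univ.filter
    (fun p : DiPath G 2 => p.1 0 = e.1.1 ∧ p.1 1 = e.1.2 ∧ G.Adj e.1.1 (p.1 2)), ψ p

/-- The block vector `z = (x, λ⁻¹x, λ⁻²x, λ⁻³x)`. -/
noncomputable def blockVec {G : SimpleGraph V} (lam : ℂ) (x : DiEdge G → ℂ) :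
    (DiEdge G ⊕ DiEdge G) ⊕ (DiEdge G ⊕ DiEdge G) → ℂ :=
  Sum.elim (Sum.elim x (lam⁻¹ • x)) (Sum.elim ((lam ^ 2)⁻¹ • x) ((lam ^ 3)⁻¹ • x))

/-- The vector `ψ` built from `x`:
`ψ_{(i,j,k)} = (λ²x_{(j,k)} − λx_{(k,i)} + x_{(i,j)})/(λ³+1)` if `i` and `k` are adjacent,
and `ψ_{(i,j,k)} = λ⁻¹ x_{(j,k)}` if `i` and `k` are not adjacent. -/
noncomputable def psiOf (G : SimpleGraph V) [DecidableRel G.Adj] (lam : ℂ)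
    (x : DiEdge G → ℂ) : DiPath G 2 → ℂ := fun p =>
  if h : G.Adj (p.1 0) (p.1 2) then
    (lam ^ 2 * x ⟨(p.1 1, p.1 2), by simpa using p.2.2 1⟩
      - lam * x ⟨(p.1 2, p.1 0), h.symm⟩
      + x ⟨(p.1 0, p.1 1), by simpa using p.2.2 0⟩) / (lam ^ 3 + 1)
  else lam⁻¹ * x ⟨(p.1 1, p.1 2), by simpa using p.2.2 1⟩


section Aux
set_option linter.unusedSectionVars false
variable {G : SimpleGraph V} [DecidableRel G.Adj]

lemma adj01 (p : DiPath G 2) : G.Adj (p.1 0) (p.1 1) := by simpa using p.2.2 0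
lemma adj12 (p : DiPath G 2) : G.Adj (p.1 1) (p.1 2) := by simpa using p.2.2 1
lemma ne02 (p : DiPath G 2) : p.1 0 ≠ p.1 2 := fun h => by
  have := p.2.1 h; exact absurd this (by decide)

lemma inj_vec3 {a b c : V} (h01 : a ≠ b) (h02 : a ≠ c) (h12 : b ≠ c) :
    Function.Injective ![a, b, c] := by
  intro x y h; fin_cases x <;> fin_cases y <;> simp_all

lemma inj_vec4 {a b c d : V} (h01 : a ≠ b) (h02 : a ≠ c) (h03 : a ≠ d)
    (h12 : b ≠ c) (h13 : b ≠ d) (h23 : c ≠ d) :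
    Function.Injective ![a, b, c, d] := by
  intro x y h; fin_cases x <;> fin_cases y <;> simp_all

def mk3 (a b c : V) (hab : G.Adj a b) (hbc : G.Adj b c) (hac : a ≠ c) : DiPath G 2 :=
  ⟨![a, b, c], inj_vec3 hab.ne hac hbc.ne, by intro k; fin_cases k <;> simpa⟩

@[simp] lemma mk3_0 (a b c : V) (hab hbc hac) : (mk3 (G:=G) a b c hab hbc hac).1 0 = a := rfl
@[simp] lemma mk3_1 (a b c : V) (hab hbc hac) : (mk3 (G:=G) a b c hab hbc hac).1 1 = b := rfl
@[simp] lemma mk3_2 (a b c : V) (hab hbc hac) : (mk3 (G:=G) a b c hab hbc hac).1 2 = c := rfl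

lemma ext3 {p q : DiPath G 2} (h0 : p.1 0 = q.1 0) (h1 : p.1 1 = q.1 1)
    (h2 : p.1 2 = q.1 2) : p = q := by
  refine Subtype.ext (funext fun k => ?_)
  fin_cases k
  · exact h0
  · exact h1
  · exact h2

lemma snoc_eq (f : Fin 3 → V) (d : V) : Fin.snoc f d = ![f 0, f 1, f 2, d] := by
  funext k; fin_cases k <;> simp [Fin.snoc] <;> rfl


lemma nbm_cond (p q : DiPath G 2) :
    ((∀ k : Fin 2, q.1 k.castSucc = p.1 k.succ) ∧
      IsDiPath G 3 (Fin.snoc p.1 (q.1 (Fin.last 2)))) ↔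
    (q.1 0 = p.1 1 ∧ q.1 1 = p.1 2 ∧ q.1 2 ≠ p.1 0) := by
  constructor
  · rintro ⟨hk, hinj, -⟩
    refine ⟨by simpa using hk 0, by simpa using hk 1, fun hne => ?_⟩
    rw [snoc_eq] at hinj
    have : (0 : Fin 4) = 3 := hinj (by simp; exact hne.symm)
    exact absurd this (by decide)
  · rintro ⟨h0, h1, h2⟩
    constructor
    · intro k; fin_cases k
      · exact h0
      · exact h1
    · rw [snoc_eq]
      refine ⟨inj_vec4 (adj01 p).ne (ne02 p) (fun h => h2 h.symm)
        (adj12 p).ne ?_ ?_, ?_⟩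
      · rw [← h0]; exact ne02 q
      · rw [← h1]; exact (adj12 q).ne
      · intro k; fin_cases k
        · simpa using adj01 p
        · simpa using adj12 p
        · exact h1 ▸ adj12 q

lemma nbm_apply (p q : DiPath G 2) :
    NBM G 2 p q = if q.1 0 = p.1 1 ∧ q.1 1 = p.1 2 ∧ q.1 2 ≠ p.1 0 then 1 else 0 := by
  simp only [NBM]
  exact if_congr (nbm_cond p q) rfl rfl


variable (G) in
/-- the "rotated triangle" term appearing in the eigen-equation. -/
noncomputable def gfun (ψ : DiPath G 2 → ℂ) : DiPath G 2 → ℂ := fun p =>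
  if h : G.Adj (p.1 0) (p.1 2) then
    ψ (mk3 (p.1 1) (p.1 2) (p.1 0) (adj12 p) h.symm (adj01 p).ne') else 0

variable (G) in
noncomputable def Svec (ψ : DiPath G 2 → ℂ) : DiEdge G → ℂ := fun e =>
  ∑ q ∈ Finset.univ.filter (fun q : DiPath G 2 => q.1 0 = e.1.2 ∧ q.1 2 = e.1.1), ψ q

variable (G) in
noncomputable def Tvec (ψ : DiPath G 2 → ℂ) : DiEdge G → ℂ := fun e =>
  ∑ r ∈ Finset.univ.filter
    (fun r : DiPath G 2 => r.1 1 = e.1.1 ∧ r.1 2 = e.1.2 ∧ G.Adj (r.1 0) e.1.2), ψ r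

lemma key {lam : ℂ} {ψ : DiPath G 2 → ℂ} (hψ : NBM G 2 *ᵥ ψ = lam • ψ)
    (p : DiPath G 2) :
    lam * ψ p = xvec G ψ ⟨(p.1 1, p.1 2), adj12 p⟩ - gfun G ψ p := by
  have h1 : (NBM G 2 *ᵥ ψ) p = lam * ψ p := by rw [hψ]; rfl
  rw [← h1]
  have h2 : (NBM G 2 *ᵥ ψ) p =
      ∑ q ∈ Finset.univ.filter
        (fun q : DiPath G 2 => (q.1 0 = p.1 1 ∧ q.1 1 = p.1 2) ∧ ¬ q.1 2 = p.1 0), ψ q := by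
    simp only [mulVec, dotProduct, nbm_apply, ite_mul, one_mul, zero_mul,
      Finset.sum_filter]
    exact Finset.sum_congr rfl fun q _ => by
      by_cases h : q.1 0 = p.1 1 ∧ q.1 1 = p.1 2 ∧ q.1 2 ≠ p.1 0
      · rw [if_pos h, if_pos ⟨⟨h.1, h.2.1⟩, h.2.2⟩]
      · rw [if_neg h, if_neg (fun hc => h ⟨hc.1.1, hc.1.2, hc.2⟩)]
  have hx : xvec G ψ ⟨(p.1 1, p.1 2), adj12 p⟩ =
      (∑ q ∈ Finset.univ.filter
        (fun q : DiPath G 2 => (q.1 0 = p.1 1 ∧ q.1 1 = p.1 2) ∧ ¬ q.1 2 = p.1 0), ψ q)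
      + gfun G ψ p := by
    rw [xvec]
    rw [← Finset.sum_filter_add_sum_filter_not
      (Finset.univ.filter (fun q : DiPath G 2 => q.1 0 = p.1 1 ∧ q.1 1 = p.1 2))
      (fun q => q.1 2 = p.1 0) ψ, add_comm]
    congr 1
    · rw [Finset.filter_filter]
    · rw [Finset.filter_filter, gfun]
      split
      · rename_i h
        have hset : Finset.univ.filter
            (fun q : DiPath G 2 => (q.1 0 = p.1 1 ∧ q.1 1 = p.1 2) ∧ q.1 2 = p.1 0) =
            {mk3 (p.1 1) (p.1 2) (p.1 0) (adj12 p) h.symm (adj01 p).ne'} := by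
          ext q
          simp only [Finset.mem_filter, Finset.mem_univ, true_and, Finset.mem_singleton]
          constructor
          · rintro ⟨⟨h0, h1⟩, h2⟩; exact ext3 h0 h1 h2
          · rintro rfl; exact ⟨⟨rfl, rfl⟩, rfl⟩
        rw [hset, Finset.sum_singleton]
      · rename_i h
        have hset : Finset.univ.filter
            (fun q : DiPath G 2 => (q.1 0 = p.1 1 ∧ q.1 1 = p.1 2) ∧ q.1 2 = p.1 0) =
            (∅ : Finset (DiPath G 2)) := by
          ext q
          simp only [Finset.mem_filter, Finset.mem_univ, true_and,
            Finset.notMem_empty, iff_false, not_and]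
          rintro ⟨h0, h1⟩ h2
          exact h ((show G.Adj (p.1 2) (p.1 0) by rw [← h1, ← h2]; exact adj12 q).symm)
        rw [hset, Finset.sum_empty]
  rw [h2, hx]; ring


lemma Bmat_mulVec (x : DiEdge G → ℂ) (e : DiEdge G) :
    (Bmat G *ᵥ x) e = ∑ f ∈ Finset.univ.filter
      (fun f : DiEdge G => e.1.2 = f.1.1 ∧ f.1.2 ≠ e.1.1 ∧ G.Adj e.1.2 f.1.2), x f := by
  simp only [Bmat, mulVec, dotProduct, ite_mul, one_mul, zero_mul, Finset.sum_filter]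

lemma dB1_mulVec (x : DiEdge G → ℂ) (e : DiEdge G) :
    (dB1 G *ᵥ x) e = ∑ f ∈ Finset.univ.filter
      (fun f : DiEdge G => (e.1.2 = f.1.1 ∧ f.1.2 ≠ e.1.1 ∧ G.Adj e.1.2 f.1.2)
        ∧ G.Adj e.1.1 f.1.2), x f := by
  simp only [dB1, mulVec, dotProduct, ite_mul, one_mul, zero_mul, Finset.sum_filter]

lemma dB2_mulVec (x : DiEdge G → ℂ) (e : DiEdge G) :
    (dB2 G *ᵥ x) e = ∑ f ∈ Finset.univ.filter
      (fun f : DiEdge G => f.1.2 = e.1.1 ∧ G.Adj e.1.2 f.1.1), x f := by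
  simp only [dB2, mulVec, dotProduct, ite_mul, one_mul, zero_mul, Finset.sum_filter]

lemma sumY (ψ : DiPath G 2 → ℂ) (e : DiEdge G) :
    ∑ p ∈ Finset.univ.filter
      (fun p : DiPath G 2 => p.1 0 = e.1.1 ∧ p.1 1 = e.1.2 ∧ G.Adj e.1.1 (p.1 2)),
      gfun G ψ p = Svec G ψ e := by
  rw [Svec]
  refine Finset.sum_bij'
    (fun p hp => mk3 (p.1 1) (p.1 2) (p.1 0) (adj12 p)
      (by simp only [Finset.mem_filter, Finset.mem_univ, true_and] at hp
          exact (show G.Adj (p.1 0) (p.1 2) by rw [hp.1]; exact hp.2.2).symm)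
      (adj01 p).ne')
    (fun q hq => mk3 e.1.1 (q.1 0) (q.1 1)
      (by simp only [Finset.mem_filter, Finset.mem_univ, true_and] at hq
          rw [hq.1]; exact e.2)
      (adj01 q)
      (by simp only [Finset.mem_filter, Finset.mem_univ, true_and] at hq
          exact (show G.Adj (q.1 1) e.1.1 by rw [← hq.2]; exact adj12 q).ne'))
    ?_ ?_ ?_ ?_ ?_
  · intro p hp
    simp only [Finset.mem_filter, Finset.mem_univ, true_and, mk3_0, mk3_1, mk3_2] at hp ⊢
    exact ⟨hp.2.1, hp.1⟩
  · intro q hq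
    simp only [Finset.mem_filter, Finset.mem_univ, true_and, mk3_0, mk3_1, mk3_2] at hq ⊢
    exact ⟨hq.1, (show G.Adj (q.1 1) e.1.1 by rw [← hq.2]; exact adj12 q).symm⟩
  · intro p hp
    simp only [Finset.mem_filter, Finset.mem_univ, true_and] at hp
    exact ext3 hp.1.symm rfl rfl
  · intro q hq
    simp only [Finset.mem_filter, Finset.mem_univ, true_and] at hq
    exact ext3 rfl rfl hq.2.symm
  · intro p hp
    simp only [Finset.mem_filter, Finset.mem_univ, true_and] at hp
    rw [gfun, dif_pos (show G.Adj (p.1 0) (p.1 2) by rw [hp.1]; exact hp.2.2)]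

lemma idA {lam : ℂ} {ψ : DiPath G 2 → ℂ} (hψ : NBM G 2 *ᵥ ψ = lam • ψ) (e : DiEdge G) :
    lam * xvec G ψ e = (Bmat G *ᵥ xvec G ψ) e - Svec G ψ e := by
  rw [show xvec G ψ e = ∑ p ∈ Finset.univ.filter
      (fun p : DiPath G 2 => p.1 0 = e.1.1 ∧ p.1 1 = e.1.2), ψ p from rfl]
  rw [Finset.mul_sum]
  rw [show (∑ p ∈ Finset.univ.filter
      (fun p : DiPath G 2 => p.1 0 = e.1.1 ∧ p.1 1 = e.1.2), lam * ψ p)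
      = ∑ p ∈ Finset.univ.filter
      (fun p : DiPath G 2 => p.1 0 = e.1.1 ∧ p.1 1 = e.1.2),
        (xvec G ψ ⟨(p.1 1, p.1 2), adj12 p⟩ - gfun G ψ p) from
    Finset.sum_congr rfl fun p _ => key hψ p]
  rw [Finset.sum_sub_distrib]
  congr 1
  · rw [Bmat_mulVec]
    refine Finset.sum_bij'
      (fun p _ => (⟨(p.1 1, p.1 2), adj12 p⟩ : DiEdge G))
      (fun f hf => mk3 e.1.1 f.1.1 f.1.2
        (by simp only [Finset.mem_filter, Finset.mem_univ, true_and] at hf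
            exact hf.1 ▸ e.2)
        f.2
        (by simp only [Finset.mem_filter, Finset.mem_univ, true_and] at hf
            exact Ne.symm hf.2.1))
      ?_ ?_ ?_ ?_ ?_
    · intro p hp
      simp only [Finset.mem_filter, Finset.mem_univ, true_and] at hp ⊢
      refine ⟨hp.2.symm, ?_, by rw [← hp.2]; exact adj12 p⟩
      rw [← hp.1]; exact (ne02 p).symm
    · intro f hf
      simp only [Finset.mem_filter, Finset.mem_univ, true_and, mk3_0, mk3_1] at hf ⊢
      exact hf.1.symm
    · intro p hp
      simp only [Finset.mem_filter, Finset.mem_univ, true_and] at hp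
      exact ext3 hp.1.symm rfl rfl
    · intro f hf
      exact Subtype.ext rfl
    · intro p hp
      rfl
  · rw [← sumY ψ e]
    refine (Finset.sum_subset ?_ ?_).symm
    · intro p hp
      simp only [Finset.mem_filter, Finset.mem_univ, true_and] at hp ⊢
      exact ⟨hp.1, hp.2.1⟩
    · intro p hp hnp
      simp only [Finset.mem_filter, Finset.mem_univ, true_and] at hp hnp
      rw [gfun, dif_neg]
      intro hadj
      exact hnp ⟨hp.1, hp.2, by rw [← hp.1]; exact hadj⟩

lemma idB {lam : ℂ} {ψ : DiPath G 2 → ℂ} (hψ : NBM G 2 *ᵥ ψ = lam • ψ) (e : DiEdge G) :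
    lam * Svec G ψ e = (dB2 G *ᵥ xvec G ψ) e - Tvec G ψ e := by
  rw [Svec, Finset.mul_sum]
  rw [show (∑ q ∈ Finset.univ.filter
      (fun q : DiPath G 2 => q.1 0 = e.1.2 ∧ q.1 2 = e.1.1), lam * ψ q)
      = ∑ q ∈ Finset.univ.filter
      (fun q : DiPath G 2 => q.1 0 = e.1.2 ∧ q.1 2 = e.1.1),
        (xvec G ψ ⟨(q.1 1, q.1 2), adj12 q⟩ - gfun G ψ q) from
    Finset.sum_congr rfl fun q _ => key hψ q]
  rw [Finset.sum_sub_distrib]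
  congr 1
  · rw [dB2_mulVec]
    refine Finset.sum_bij'
      (fun q _ => (⟨(q.1 1, q.1 2), adj12 q⟩ : DiEdge G))
      (fun f hf => mk3 e.1.2 f.1.1 f.1.2
        (by simp only [Finset.mem_filter, Finset.mem_univ, true_and] at hf
            exact hf.2)
        f.2
        (by simp only [Finset.mem_filter, Finset.mem_univ, true_and] at hf
            rw [hf.1]; exact e.2.ne'))
      ?_ ?_ ?_ ?_ ?_
    · intro q hq
      simp only [Finset.mem_filter, Finset.mem_univ, true_and] at hq ⊢
      exact ⟨hq.2, by rw [← hq.1]; exact adj01 q⟩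
    · intro f hf
      simp only [Finset.mem_filter, Finset.mem_univ, true_and, mk3_0, mk3_2] at hf ⊢
      exact hf.1
    · intro q hq
      simp only [Finset.mem_filter, Finset.mem_univ, true_and] at hq
      exact ext3 hq.1.symm rfl rfl
    · intro f hf
      exact Subtype.ext rfl
    · intro q hq
      rfl
  · rw [Tvec]
    refine Finset.sum_bij'
      (fun q hq => mk3 (q.1 1) (q.1 2) (q.1 0) (adj12 q)
        (by simp only [Finset.mem_filter, Finset.mem_univ, true_and] at hq
            rw [hq.1, hq.2]; exact e.2)
        (adj01 q).ne')
      (fun r hr => mk3 e.1.2 (r.1 0) (r.1 1)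
        (by simp only [Finset.mem_filter, Finset.mem_univ, true_and] at hr
            exact hr.2.2.symm)
        (adj01 r)
        (by simp only [Finset.mem_filter, Finset.mem_univ, true_and] at hr
            rw [hr.1]; exact e.2.ne'))
      ?_ ?_ ?_ ?_ ?_
    · intro q hq
      simp only [Finset.mem_filter, Finset.mem_univ, true_and, mk3_0, mk3_1, mk3_2] at hq ⊢
      exact ⟨hq.2, hq.1, by rw [← hq.1]; exact (adj01 q).symm⟩
    · intro r hr
      simp only [Finset.mem_filter, Finset.mem_univ, true_and, mk3_0, mk3_1, mk3_2] at hr ⊢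
      exact hr.1
    · intro q hq
      simp only [Finset.mem_filter, Finset.mem_univ, true_and] at hq
      exact ext3 hq.1.symm rfl rfl
    · intro r hr
      simp only [Finset.mem_filter, Finset.mem_univ, true_and] at hr
      exact ext3 rfl rfl hr.2.1.symm
    · intro q hq
      simp only [Finset.mem_filter, Finset.mem_univ, true_and] at hq
      rw [gfun, dif_pos (show G.Adj (q.1 0) (q.1 2) by rw [hq.1, hq.2]; exact e.2.symm)]


lemma idC {lam : ℂ} {ψ : DiPath G 2 → ℂ} (hψ : NBM G 2 *ᵥ ψ = lam • ψ) (e : DiEdge G) :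
    lam * Tvec G ψ e =
      ((Finset.univ.filter fun v => G.Adj e.1.1 v ∧ G.Adj e.1.2 v).card : ℂ)
        * xvec G ψ e - yvec G ψ e := by
  rw [Tvec, Finset.mul_sum]
  rw [show (∑ r ∈ Finset.univ.filter
      (fun r : DiPath G 2 => r.1 1 = e.1.1 ∧ r.1 2 = e.1.2 ∧ G.Adj (r.1 0) e.1.2),
        lam * ψ r)
      = ∑ r ∈ Finset.univ.filter
      (fun r : DiPath G 2 => r.1 1 = e.1.1 ∧ r.1 2 = e.1.2 ∧ G.Adj (r.1 0) e.1.2),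
        (xvec G ψ ⟨(r.1 1, r.1 2), adj12 r⟩ - gfun G ψ r) from
    Finset.sum_congr rfl fun r _ => key hψ r]
  rw [Finset.sum_sub_distrib]
  congr 1
  · rw [show (∑ r ∈ Finset.univ.filter
        (fun r : DiPath G 2 => r.1 1 = e.1.1 ∧ r.1 2 = e.1.2 ∧ G.Adj (r.1 0) e.1.2),
          xvec G ψ ⟨(r.1 1, r.1 2), adj12 r⟩)
        = ∑ _r ∈ Finset.univ.filter
        (fun r : DiPath G 2 => r.1 1 = e.1.1 ∧ r.1 2 = e.1.2 ∧ G.Adj (r.1 0) e.1.2),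
          xvec G ψ e from Finset.sum_congr rfl fun r hr => by
      simp only [Finset.mem_filter, Finset.mem_univ, true_and] at hr
      congr 1
      exact Subtype.ext (by rw [Prod.ext_iff]; exact ⟨hr.1, hr.2.1⟩)]
    rw [Finset.sum_const, nsmul_eq_mul]
    congr 2
    refine Finset.card_bij' (fun r _ => r.1 0)
      (fun v hv => mk3 v e.1.1 e.1.2
        (by simp only [Finset.mem_filter, Finset.mem_univ, true_and] at hv
            exact hv.1.symm)
        e.2
        (by simp only [Finset.mem_filter, Finset.mem_univ, true_and] at hv
            exact hv.2.ne'))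
      ?_ ?_ ?_ ?_
    · intro r hr
      simp only [Finset.mem_filter, Finset.mem_univ, true_and] at hr ⊢
      exact ⟨by rw [← hr.1]; exact (adj01 r).symm, hr.2.2.symm⟩
    · intro v hv
      simp only [Finset.mem_filter, Finset.mem_univ, true_and, mk3_0, mk3_1, mk3_2] at hv ⊢
      exact hv.2.symm
    · intro r hr
      simp only [Finset.mem_filter, Finset.mem_univ, true_and] at hr
      exact ext3 rfl hr.1.symm hr.2.1.symm
    · intro v hv
      rfl
  · rw [yvec]
    refine Finset.sum_bij'
      (fun r hr => mk3 (r.1 1) (r.1 2) (r.1 0) (adj12 r)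
        (by simp only [Finset.mem_filter, Finset.mem_univ, true_and] at hr
            rw [hr.2.1]; exact hr.2.2.symm)
        (adj01 r).ne')
      (fun p hp => mk3 (p.1 2) (p.1 0) (p.1 1)
        (by simp only [Finset.mem_filter, Finset.mem_univ, true_and] at hp
            exact (show G.Adj (p.1 0) (p.1 2) by rw [hp.1]; exact hp.2.2).symm)
        (adj01 p)
        (adj12 p).ne')
      ?_ ?_ ?_ ?_ ?_
    · intro r hr
      simp only [Finset.mem_filter, Finset.mem_univ, true_and, mk3_0, mk3_1, mk3_2] at hr ⊢
      exact ⟨hr.1, hr.2.1, by rw [← hr.1]; exact (adj01 r).symm⟩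
    · intro p hp
      simp only [Finset.mem_filter, Finset.mem_univ, true_and, mk3_0, mk3_1, mk3_2] at hp ⊢
      exact ⟨hp.1, hp.2.1, by rw [← hp.2.1]; exact (adj12 p).symm⟩
    · intro r hr
      exact ext3 rfl rfl rfl
    · intro p hp
      exact ext3 rfl rfl rfl
    · intro r hr
      simp only [Finset.mem_filter, Finset.mem_univ, true_and] at hr
      rw [gfun, dif_pos (show G.Adj (r.1 0) (r.1 2) by rw [hr.2.1]; exact hr.2.2)]

lemma idD {lam : ℂ} {ψ : DiPath G 2 → ℂ} (hψ : NBM G 2 *ᵥ ψ = lam • ψ) (e : DiEdge G) :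
    lam * yvec G ψ e = (dB1 G *ᵥ xvec G ψ) e - Svec G ψ e := by
  rw [yvec, Finset.mul_sum]
  rw [show (∑ p ∈ Finset.univ.filter
      (fun p : DiPath G 2 => p.1 0 = e.1.1 ∧ p.1 1 = e.1.2 ∧ G.Adj e.1.1 (p.1 2)),
        lam * ψ p)
      = ∑ p ∈ Finset.univ.filter
      (fun p : DiPath G 2 => p.1 0 = e.1.1 ∧ p.1 1 = e.1.2 ∧ G.Adj e.1.1 (p.1 2)),
        (xvec G ψ ⟨(p.1 1, p.1 2), adj12 p⟩ - gfun G ψ p) from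
    Finset.sum_congr rfl fun p _ => key hψ p]
  rw [Finset.sum_sub_distrib]
  congr 1
  · rw [dB1_mulVec]
    refine Finset.sum_bij'
      (fun p _ => (⟨(p.1 1, p.1 2), adj12 p⟩ : DiEdge G))
      (fun f hf => mk3 e.1.1 f.1.1 f.1.2
        (by simp only [Finset.mem_filter, Finset.mem_univ, true_and] at hf
            exact hf.1.1 ▸ e.2)
        f.2
        (by simp only [Finset.mem_filter, Finset.mem_univ, true_and] at hf
            exact hf.2.ne))
      ?_ ?_ ?_ ?_ ?_
    · intro p hp
      simp only [Finset.mem_filter, Finset.mem_univ, true_and] at hp ⊢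
      exact ⟨⟨hp.2.1.symm, hp.2.2.ne', by rw [← hp.2.1]; exact adj12 p⟩, hp.2.2⟩
    · intro f hf
      simp only [Finset.mem_filter, Finset.mem_univ, true_and, mk3_0, mk3_1, mk3_2] at hf ⊢
      exact ⟨hf.1.1.symm, hf.2⟩
    · intro p hp
      simp only [Finset.mem_filter, Finset.mem_univ, true_and] at hp
      exact ext3 hp.1.symm rfl rfl
    · intro f hf
      exact Subtype.ext rfl
    · intro p hp
      rfl
  · exact sumY ψ e



end Aux

/-- **Identity (F16).** The vector `x` satisfies the quartic eigen-equation
`λ⁴x = λ³Bx − λ²(ΔB₂)x + λ(D_Δ − I)x + (B − ΔB₁)x`. -/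
theorem identity_F16 (G : SimpleGraph V) [DecidableRel G.Adj]
    (lam : ℂ) (h0 : lam ≠ 0) (ψ : DiPath G 2 → ℂ) (hψ : (NBM G 2) *ᵥ ψ = lam • ψ) :
    lam ^ 4 • xvec G ψ =
      lam ^ 3 • ((Bmat G) *ᵥ xvec G ψ) - lam ^ 2 • ((dB2 G) *ᵥ xvec G ψ)
        + lam • ((Ddel G - 1) *ᵥ xvec G ψ) + (Bmat G - dB1 G) *ᵥ xvec G ψ := by
  funext e
  have A := idA hψ e
  have B := idB hψ e
  have C := idC hψ e
  have D := idD hψ e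
  have hDdel : ((Ddel G - 1) *ᵥ xvec G ψ) e =
      ((Finset.univ.filter fun v => G.Adj e.1.1 v ∧ G.Adj e.1.2 v).card : ℂ)
        * xvec G ψ e - xvec G ψ e := by
    rw [Matrix.sub_mulVec, Matrix.one_mulVec]
    simp [Ddel, Matrix.mulVec_diagonal]
  have hBd : ((Bmat G - dB1 G) *ᵥ xvec G ψ) e =
      (Bmat G *ᵥ xvec G ψ) e - (dB1 G *ᵥ xvec G ψ) e := by
    rw [Matrix.sub_mulVec]; rfl
  simp only [Pi.add_apply, Pi.sub_apply, Pi.smul_apply, smul_eq_mul]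
  rw [hBd, hDdel]
  linear_combination (lam ^ 3 + 1) * A - lam ^ 2 * B + lam * C - D

end PercNB
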